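/- arXiv:1104.1039 — 3 statements merged into one kernel-verified Lean document; each statement's English description precedes it below -/
import Mathlib

section
/- Let f(x₁,x₂) = 1(0 ≤ x₁√x₂ ≤ 1)·1(0 ≤ x₂√x₁ ≤ 1) on ℝ². Then f ∈ L¹(ℝ²) ∩ L²(ℝ²), but the function f₁(y) = 2·1(y ≥ 0)·min{1/y², 1/√y} = 2∫_ℝ f(y,x) dx is not in L²(ℝ). -/
/-!
For `y > 0` the slice `{x | f(y, x) = 1}` is the interval `[0, min (y⁻²) (y^(-1/2))]`, so by
Fubini `f` is integrable as soon as this length is integrable on `(0, ∞)`, which it is: it is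
bounded by `y^(-1/2)` near `0` and by `y⁻²` near `∞`. Since `f` is an indicator, `f² = f` and
`f ∈ L²` follows. On `(0, 1]`, however, the slice length is `y^(-1/2)`, so `f₁² = 4 / y` there,
which is not integrable at `0`.
-/

open MeasureTheory

noncomputable section

/-- `f(x₁,x₂) = 1(0 ≤ x₁√x₂ ≤ 1)·1(0 ≤ x₂√x₁ ≤ 1)`, supported on the positive quadrant. -/
def ffun : ℝ × ℝ → ℝ := fun p =>
  if 0 ≤ p.1 ∧ 0 ≤ p.2 ∧ p.1 * Real.sqrt p.2 ≤ 1 ∧ p.2 * Real.sqrt p.1 ≤ 1 then 1 else 0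

/-- The first chaos kernel `f₁(y) = 2 ∫ f(y,x) dx`. -/
def f1fun : ℝ → ℝ := fun y => 2 * ∫ x, ffun (y, x)

open Set Real

lemma mul_sqrt_le_one_iff {x y : ℝ} (hy : 0 < y) : y * √x ≤ 1 ↔ x ≤ 1 / y ^ 2 := by
  rw [← le_div_iff₀' hy, sqrt_le_iff, div_pow, one_pow]
  simp [hy.le]

def sliceLength (y : ℝ) : ℝ := min (1 / y ^ 2) (1 / √y)

lemma sliceLength_nonneg (y : ℝ) : 0 ≤ sliceLength y :=
  le_min (by positivity) (by positivity)

lemma sliceLength_eq_of_le_one {y : ℝ} (hy₀ : 0 < y) (hy₁ : y ≤ 1) :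
    sliceLength y = 1 / √y := by
  have hsq : y ^ 2 ≤ y := pow_le_of_le_one hy₀.le hy₁ two_ne_zero
  exact min_eq_right <| one_div_le_one_div_of_le (by positivity) <|
    hsq.trans ((le_sqrt hy₀.le hy₀.le).2 hsq)

lemma measurable_sliceLength : Measurable sliceLength := by
  unfold sliceLength; fun_prop

lemma integrableOn_sliceLength : IntegrableOn sliceLength (Ioi 0) := by
  have hmeas := measurable_sliceLength.aestronglyMeasurable (μ := volume)
  rw [← Ioc_union_Ioi_eq_Ioi zero_le_one]
  refine IntegrableOn.union ?_ ?_
  · refine Integrable.mono' (intervalIntegral.intervalIntegrable_rpow' (r := -(1 / 2))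
      (a := 0) (b := 1) (by norm_num)).1 hmeas.restrict
      (ae_restrict_of_forall_mem measurableSet_Ioc fun y hy => ?_)
    rw [norm_of_nonneg (sliceLength_nonneg y), rpow_neg hy.1.le, ← sqrt_eq_rpow, ← one_div]
    exact min_le_right _ _
  · refine Integrable.mono' (integrableOn_Ioi_rpow_of_lt (a := -2) (by norm_num) one_pos)
      hmeas.restrict (ae_restrict_of_forall_mem measurableSet_Ioi fun y hy => ?_)
    rw [norm_of_nonneg (sliceLength_nonneg y), rpow_neg (one_pos.trans hy).le, rpow_two,
      ← one_div]
    exact min_le_left _ _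

lemma ffun_nonneg (p : ℝ × ℝ) : 0 ≤ ffun p := by
  unfold ffun; split_ifs <;> norm_num

lemma ffun_sq (p : ℝ × ℝ) : ffun p ^ 2 = ffun p := by
  unfold ffun; split_ifs <;> norm_num

lemma measurable_ffun : Measurable ffun := by
  unfold ffun
  exact Measurable.ite (by measurability) measurable_const measurable_const

lemma ffun_slice_of_neg {y : ℝ} (hy : y < 0) : (fun x => ffun (y, x)) = 0 := by
  funext x
  simp [ffun, hy.not_ge]

lemma ffun_slice_of_pos {y : ℝ} (hy : 0 < y) :
    (fun x => ffun (y, x)) = (Icc 0 (sliceLength y)).indicator 1 := by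
  funext x
  simp only [ffun, indicator_apply, mem_Icc, sliceLength, le_min_iff, mul_sqrt_le_one_iff hy,
    ← le_div_iff₀ (sqrt_pos.2 hy), hy.le, true_and, Pi.one_apply]

lemma integral_ffun_slice {y : ℝ} (hy : 0 < y) : ∫ x, ffun (y, x) = sliceLength y := by
  rw [ffun_slice_of_pos hy, integral_indicator_one measurableSet_Icc, measureReal_def,
    volume_Icc, sub_zero, ENNReal.toReal_ofReal (sliceLength_nonneg y)]

-- The slice at `y = 0` is `[0, ∞)`, so integrability of slices only holds almost everywhere.
lemma ae_integrable_ffun_slice : ∀ᵐ y : ℝ, Integrable fun x => ffun (y, x) := by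
  filter_upwards [Measure.ae_ne volume 0] with y hy
  rcases hy.lt_or_gt with hy | hy
  · rw [ffun_slice_of_neg hy]; exact integrable_zero _ _ _
  · rw [ffun_slice_of_pos hy]
    exact (integrable_indicator_iff measurableSet_Icc).2 (integrableOn_const measure_Icc_lt_top.ne)

lemma indicator_sliceLength_ae_eq :
    (Ioi 0).indicator sliceLength =ᵐ[volume] fun y => ∫ x, ffun (y, x) := by
  filter_upwards [Measure.ae_ne volume 0] with y hy
  rcases hy.lt_or_gt with hy | hy
  · simp [hy.le, ffun_slice_of_neg hy]
  · simp [hy, integral_ffun_slice hy]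

lemma integrable_ffun : Integrable ffun := by
  rw [Measure.volume_eq_prod, integrable_prod_iff measurable_ffun.aestronglyMeasurable]
  refine ⟨ae_integrable_ffun_slice, ?_⟩
  simp only [norm_of_nonneg (ffun_nonneg _)]
  exact ((integrable_indicator_iff measurableSet_Ioi).2 integrableOn_sliceLength).congr
    indicator_sliceLength_ae_eq

lemma memLp_two_ffun : MemLp ffun 2 := by
  rw [memLp_two_iff_integrable_sq measurable_ffun.aestronglyMeasurable]
  simpa only [ffun_sq] using integrable_ffun

lemma f1fun_eq {y : ℝ} (hy : 0 < y) : f1fun y = 2 * sliceLength y := by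
  rw [f1fun, integral_ffun_slice hy]

lemma f1fun_sq_of_le_one {y : ℝ} (hy₀ : 0 < y) (hy₁ : y ≤ 1) : f1fun y ^ 2 = 4 * y⁻¹ := by
  rw [f1fun_eq hy₀, sliceLength_eq_of_le_one hy₀ hy₁, mul_pow, div_pow, sq_sqrt hy₀.le]
  ring

lemma not_memLp_two_f1fun : ¬ MemLp f1fun 2 := by
  intro h
  have hsq : IntegrableOn (fun y => 4⁻¹ * f1fun y ^ 2) (Ioc 0 1) :=
    (h.integrable_sq.const_mul _).integrableOn
  have hinv : IntervalIntegrable (fun y : ℝ => y⁻¹) volume 0 1 := by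
    refine (intervalIntegrable_iff_integrableOn_Ioc_of_le zero_le_one).2 <|
      hsq.congr_fun (fun y hy => ?_) measurableSet_Ioc
    simp only [f1fun_sq_of_le_one hy.1 hy.2]
    ring
  simp [intervalIntegrable_inv_iff] at hinv

/-- `f ∈ L¹(ℝ²) ∩ L²(ℝ²)`, the first kernel satisfies
`f₁(y) = 2·min{1/y², 1/√y}` for `y > 0`, yet `f₁ ∉ L²(ℝ)`. -/
theorem ffun_L1_L2_but_first_kernel_not_L2 :
    Integrable ffun (volume : Measure (ℝ × ℝ)) ∧
    MemLp ffun 2 (volume : Measure (ℝ × ℝ)) ∧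
    (∀ y : ℝ, 0 < y → f1fun y = 2 * min (1 / y ^ 2) (1 / Real.sqrt y)) ∧
    ¬ MemLp f1fun 2 (volume : Measure ℝ) :=
  ⟨integrable_ffun, memLp_two_ffun, fun _ hy => f1fun_eq hy, not_memLp_two_f1fun⟩

end
end

section
/- For the random variable F = L(L−1) + R(R−1) − 2LR with L, R independent Poisson(λ), the normalized third moment E[((F − E F)/√(Var F))³] = 64λ³/(8λ²)^{3/2} = 2√2 does not tend to 0 as λ → ∞; in particular the skewness is a constant 2√2 for all λ > 0. -/
/-!
The Stein–Chen identity `E[L g(L)] = λ E[g(L + 1)]` of a Poisson variable, applied in each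
coordinate, turns multiplication by `F = L(L-1) + R(R-1) - 2LR` into a second difference along
the antidiagonal: `E[F G] = λ² E[(ΔG)(L, R)]` with
`(ΔG)(l, r) = G(l + 2, r) - 2 G(l + 1, r + 1) + G(l, r + 2)`. Since `ΔF = 8` and
`Δ(F²) = 48 F + 32 (L + R)`, this gives `E F = 0`, `E F² = 8λ²` and `E F³ = 32 λ² E[L + R] = 64λ³`.
Integrands are kept polynomial in `(L, R)`, so that integrability is never an issue.
-/

open MeasureTheory ProbabilityTheory

noncomputable section

open MvPolynomial
open scoped NNReal Nat

namespace ProbabilityTheory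

variable {r : ℝ≥0}

lemma integrable_pow_poissonMeasure (k : ℕ) :
    Integrable (fun n : ℕ => (n : ℝ) ^ k) (poissonMeasure r) := by
  rw [integrable_poissonMeasure_iff]
  -- `n ^ k ≤ k! eⁿ`, and the Poisson weights have all exponential moments
  refine .of_nonneg_of_le (fun n => by positivity) (fun n => ?_)
    ((Real.summable_pow_div_factorial (r * Real.exp 1)).mul_left (Real.exp (-r) * k !))
  have hk : (n : ℝ) ^ k ≤ k ! * Real.exp 1 ^ n := by
    have := Real.pow_div_factorial_le_exp (n : ℝ) (Nat.cast_nonneg n) k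
    rw [div_le_iff₀ (by positivity), ← Real.exp_one_pow] at this
    linarith
  rw [norm_pow, Real.norm_natCast, mul_pow]
  calc Real.exp (-r) * r ^ n / n ! * (n : ℝ) ^ k
      ≤ Real.exp (-r) * r ^ n / n ! * (k ! * Real.exp 1 ^ n) := by gcongr
    _ = _ := by ring

/- No integrability is needed: both sides are the same series after reindexing `n = m + 1`, and
`integral_poissonMeasure` holds whether or not it converges. -/
lemma integral_natCast_mul_poissonMeasure (f : ℕ → ℝ) :
    ∫ n, n * f n ∂poissonMeasure r = r * ∫ n, f (n + 1) ∂poissonMeasure r := by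
  simp only [integral_poissonMeasure, smul_eq_mul, ← tsum_mul_left]
  rw [← Nat.succ_injective.tsum_eq (f := fun n : ℕ => Real.exp (-r) * r ^ n / n ! * (n * f n))]
  · congr 1 with n
    rw [Nat.factorial_succ, pow_succ]
    push_cast
    field_simp
  · intro n hn
    cases n with
    | zero => simp at hn
    | succ n => exact ⟨n, rfl⟩

section Pair

local notation "Po²" => Measure.prod (poissonMeasure r) (poissonMeasure r)

lemma integrable_eval_prod_poissonMeasure (Q : MvPolynomial (Fin 2) ℝ) :
    Integrable (fun p : ℕ × ℕ => eval ![(p.1 : ℝ), p.2] Q) Po² := by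
  simp only [eval_eq', Fin.prod_univ_two, Matrix.cons_val_zero, Matrix.cons_val_one]
  exact integrable_finsetSum _ fun d _ =>
    ((integrable_pow_poissonMeasure _).mul_prod (integrable_pow_poissonMeasure _)).const_mul _

lemma integral_fst_mul_prod_poissonMeasure {g : ℕ × ℕ → ℝ}
    (hg : Integrable (fun p : ℕ × ℕ => p.1 * g p) Po²)
    (hg' : Integrable (fun p : ℕ × ℕ => g (p.1 + 1, p.2)) Po²) :
    ∫ p, p.1 * g p ∂Po² = r * ∫ p, g (p.1 + 1, p.2) ∂Po² := by
  rw [integral_prod_symm _ hg, integral_prod_symm _ hg', ← integral_const_mul]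
  simp only [integral_natCast_mul_poissonMeasure]

lemma integral_snd_mul_prod_poissonMeasure {g : ℕ × ℕ → ℝ}
    (hg : Integrable (fun p : ℕ × ℕ => p.2 * g p) Po²)
    (hg' : Integrable (fun p : ℕ × ℕ => g (p.1, p.2 + 1)) Po²) :
    ∫ p, p.2 * g p ∂Po² = r * ∫ p, g (p.1, p.2 + 1) ∂Po² := by
  rw [integral_prod _ hg, integral_prod _ hg', ← integral_const_mul]
  simp only [integral_natCast_mul_poissonMeasure]

variable (r) in
def pairPoissonExpectation : MvPolynomial (Fin 2) ℝ →ₗ[ℝ] ℝ where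
  toFun Q := ∫ p, eval ![(p.1 : ℝ), p.2] Q ∂Po²
  map_add' P Q := by
    simp only [map_add]
    exact integral_add (integrable_eval_prod_poissonMeasure P)
      (integrable_eval_prod_poissonMeasure Q)
  map_smul' c Q := by simp [smul_eval, integral_const_mul]

def shiftFst : MvPolynomial (Fin 2) ℝ →ₐ[ℝ] MvPolynomial (Fin 2) ℝ :=
  bind₁ ![X 0 + 1, X 1]

def shiftSnd : MvPolynomial (Fin 2) ℝ →ₐ[ℝ] MvPolynomial (Fin 2) ℝ :=
  bind₁ ![X 0, X 1 + 1]

@[simp] lemma shiftFst_X_zero : shiftFst (X 0) = X 0 + 1 := bind₁_X_right _ _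
@[simp] lemma shiftFst_X_one : shiftFst (X 1) = X 1 := bind₁_X_right _ _
@[simp] lemma shiftSnd_X_zero : shiftSnd (X 0) = X 0 := bind₁_X_right _ _
@[simp] lemma shiftSnd_X_one : shiftSnd (X 1) = X 1 + 1 := bind₁_X_right _ _

lemma eval_bind₁_fin_two (x y : ℝ) (f : Fin 2 → MvPolynomial (Fin 2) ℝ)
    (Q : MvPolynomial (Fin 2) ℝ) :
    eval ![x, y] (bind₁ f Q) = eval ![eval ![x, y] (f 0), eval ![x, y] (f 1)] Q := by
  change eval₂Hom (RingHom.id ℝ) ![x, y] (bind₁ f Q) = _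
  rw [eval₂Hom_bind₁]
  congr 2 with i
  fin_cases i <;> rfl

@[simp] lemma eval_shiftFst (x y : ℝ) (Q : MvPolynomial (Fin 2) ℝ) :
    eval ![x, y] (shiftFst Q) = eval ![x + 1, y] Q := by
  simp [shiftFst, eval_bind₁_fin_two]

@[simp] lemma eval_shiftSnd (x y : ℝ) (Q : MvPolynomial (Fin 2) ℝ) :
    eval ![x, y] (shiftSnd Q) = eval ![x, y + 1] Q := by
  simp [shiftSnd, eval_bind₁_fin_two]

lemma pairPoissonExpectation_X_zero_mul (Q : MvPolynomial (Fin 2) ℝ) :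
    pairPoissonExpectation r (X 0 * Q) = r * pairPoissonExpectation r (shiftFst Q) := by
  have hQ := integrable_eval_prod_poissonMeasure (r := r) (X 0 * Q)
  have hQ' := integrable_eval_prod_poissonMeasure (r := r) (shiftFst Q)
  simp only [map_mul, eval_X, Matrix.cons_val_zero, eval_shiftFst] at hQ hQ'
  simpa [pairPoissonExpectation] using
    integral_fst_mul_prod_poissonMeasure hQ (by simpa using hQ')

lemma pairPoissonExpectation_X_one_mul (Q : MvPolynomial (Fin 2) ℝ) :
    pairPoissonExpectation r (X 1 * Q) = r * pairPoissonExpectation r (shiftSnd Q) := by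
  have hQ := integrable_eval_prod_poissonMeasure (r := r) (X 1 * Q)
  have hQ' := integrable_eval_prod_poissonMeasure (r := r) (shiftSnd Q)
  simp only [map_mul, eval_X, Matrix.cons_val_one, eval_shiftSnd] at hQ hQ'
  simpa [pairPoissonExpectation] using
    integral_snd_mul_prod_poissonMeasure hQ (by simpa using hQ')

@[simp] lemma pairPoissonExpectation_one : pairPoissonExpectation r 1 = 1 := by
  simp [pairPoissonExpectation]

lemma pairPoissonExpectation_X_zero : pairPoissonExpectation r (X 0) = r := by
  simpa using pairPoissonExpectation_X_zero_mul (r := r) 1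

lemma pairPoissonExpectation_X_one : pairPoissonExpectation r (X 1) = r := by
  simpa using pairPoissonExpectation_X_one_mul (r := r) 1

def quadratic : MvPolynomial (Fin 2) ℝ :=
  X 0 * (X 0 - 1) + X 1 * (X 1 - 1) - 2 * X 0 * X 1

def antidiagSecondDiff (Q : MvPolynomial (Fin 2) ℝ) : MvPolynomial (Fin 2) ℝ :=
  shiftFst (shiftFst Q) - (2 : ℝ) • shiftSnd (shiftFst Q) + shiftSnd (shiftSnd Q)

lemma pairPoissonExpectation_quadratic_mul (Q : MvPolynomial (Fin 2) ℝ) :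
    pairPoissonExpectation r (quadratic * Q)
      = r ^ 2 * pairPoissonExpectation r (antidiagSecondDiff Q) := by
  have hsplit : quadratic * Q = X 0 * ((X 0 - 1) * Q) + X 1 * ((X 1 - 1) * Q)
      - (2 : ℝ) • (X 0 * (X 1 * Q)) := by
    rw [quadratic, Algebra.smul_def, map_ofNat]
    ring
  have hFst : shiftFst (X 0 - 1) = X 0 := by simp
  have hSnd : shiftSnd (X 1 - 1) = X 1 := by simp
  rw [hsplit, antidiagSecondDiff, map_sub, map_add, map_smul, map_add, map_sub, map_smul]
  simp only [pairPoissonExpectation_X_zero_mul, pairPoissonExpectation_X_one_mul, map_mul, hFst,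
    hSnd, shiftFst_X_one, smul_eq_mul]
  ring

lemma antidiagSecondDiff_one : antidiagSecondDiff 1 = 0 := by
  simp only [antidiagSecondDiff, map_one]
  module

lemma antidiagSecondDiff_quadratic : antidiagSecondDiff quadratic = (8 : ℝ) • 1 := by
  simp only [antidiagSecondDiff, quadratic, map_add, map_sub, map_mul, map_ofNat, map_one,
    shiftFst_X_zero, shiftFst_X_one, shiftSnd_X_zero, shiftSnd_X_one, Algebra.smul_def]
  ring

lemma antidiagSecondDiff_quadratic_sq :
    antidiagSecondDiff (quadratic ^ 2) = (48 : ℝ) • quadratic + (32 : ℝ) • (X 0 + X 1) := by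
  simp only [antidiagSecondDiff, quadratic, map_pow, map_add, map_sub, map_mul, map_ofNat, map_one,
    shiftFst_X_zero, shiftFst_X_one, shiftSnd_X_zero, shiftSnd_X_one, Algebra.smul_def]
  ring

lemma pairPoissonExpectation_quadratic : pairPoissonExpectation r quadratic = 0 := by
  simpa [antidiagSecondDiff_one] using pairPoissonExpectation_quadratic_mul (r := r) 1

lemma pairPoissonExpectation_quadratic_sq :
    pairPoissonExpectation r (quadratic ^ 2) = 8 * r ^ 2 := by
  rw [sq, pairPoissonExpectation_quadratic_mul, antidiagSecondDiff_quadratic, map_smul,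
    pairPoissonExpectation_one, smul_eq_mul]
  ring

lemma pairPoissonExpectation_quadratic_pow_three :
    pairPoissonExpectation r (quadratic ^ 3) = 64 * r ^ 3 := by
  rw [pow_succ', pairPoissonExpectation_quadratic_mul, antidiagSecondDiff_quadratic_sq]
  simp only [map_add, map_smul, pairPoissonExpectation_quadratic, pairPoissonExpectation_X_zero,
    pairPoissonExpectation_X_one, smul_eq_mul]
  ring

end Pair

variable {Ω : Type*} [MeasurableSpace Ω] {P : Measure Ω}

lemma hasLaw_poissonMeasure_of_measure_eq {N : Ω → ℕ} (hN : Measurable N)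
    (h : ∀ n : ℕ, P {ω | N ω = n} = ENNReal.ofReal (Real.exp (-r) * r ^ n / n !)) :
    HasLaw N (poissonMeasure r) P where
  aemeasurable := hN.aemeasurable
  map_eq := Measure.ext_of_singleton fun n => by
    rw [Measure.map_apply hN (measurableSet_singleton n), poissonMeasure_singleton, ← h n]
    rfl

lemma HasLaw.integrable_eval_pairPoisson {L R : Ω → ℕ}
    (hLR : HasLaw (fun ω => (L ω, R ω)) ((poissonMeasure r).prod (poissonMeasure r)) P)
    (Q : MvPolynomial (Fin 2) ℝ) :
    Integrable (fun ω => eval ![(L ω : ℝ), R ω] Q) P := by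
  have := integrable_eval_prod_poissonMeasure (r := r) Q
  rwa [← hLR.map_eq, integrable_map_measure .of_discrete hLR.aemeasurable] at this

lemma HasLaw.integral_eval_pairPoisson {L R : Ω → ℕ}
    (hLR : HasLaw (fun ω => (L ω, R ω)) ((poissonMeasure r).prod (poissonMeasure r)) P)
    (Q : MvPolynomial (Fin 2) ℝ) :
    ∫ ω, eval ![(L ω : ℝ), R ω] Q ∂P = pairPoissonExpectation r Q :=
  hLR.integral_comp (f := fun p : ℕ × ℕ => eval ![(p.1 : ℝ), p.2] Q) .of_discrete

lemma HasLaw.memLp_eval_pairPoisson {L R : Ω → ℕ}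
    (hLR : HasLaw (fun ω => (L ω, R ω)) ((poissonMeasure r).prod (poissonMeasure r)) P)
    (Q : MvPolynomial (Fin 2) ℝ) :
    MemLp (fun ω => eval ![(L ω : ℝ), R ω] Q) 2 P := by
  have hQ2 := hLR.integrable_eval_pairPoisson (Q ^ 2)
  rw [memLp_two_iff_integrable_sq (hLR.integrable_eval_pairPoisson Q).aestronglyMeasurable]
  simpa only [map_pow] using hQ2

lemma HasLaw.variance_eval_pairPoisson {L R : Ω → ℕ}
    (hLR : HasLaw (fun ω => (L ω, R ω)) ((poissonMeasure r).prod (poissonMeasure r)) P)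
    (Q : MvPolynomial (Fin 2) ℝ) :
    variance (fun ω => eval ![(L ω : ℝ), R ω] Q) P
      = pairPoissonExpectation r (Q ^ 2) - pairPoissonExpectation r Q ^ 2 := by
  have := hLR.isProbabilityMeasure
  rw [variance_eq_sub (hLR.memLp_eval_pairPoisson Q)]
  simp only [Pi.pow_apply, ← map_pow, hLR.integral_eval_pairPoisson]

end ProbabilityTheory

lemma sqrt_pow_three_eq_rpow {x : ℝ} (hx : 0 ≤ x) : √x ^ 3 = x ^ ((3 : ℝ) / 2) := by
  rw [Real.rpow_div_two_eq_sqrt _ hx]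
  norm_cast

lemma sixty_four_mul_pow_three_div_rpow_eq {x : ℝ} (hx : 0 < x) :
    64 * x ^ 3 / (8 * x ^ 2) ^ ((3 : ℝ) / 2) = 2 * √2 := by
  have h2 : √2 ^ 2 = 2 := Real.sq_sqrt zero_le_two
  have hsqrt : √(8 * x ^ 2) = 2 * √2 * x := by
    rw [show 8 * x ^ 2 = (2 * √2 * x) ^ 2 by linear_combination (-4 * x ^ 2) * h2,
      Real.sqrt_sq (by positivity)]
  rw [← sqrt_pow_three_eq_rpow (by positivity), hsqrt, div_eq_iff (by positivity)]
  linear_combination (-16 * x ^ 3 * (√2 ^ 2 + 2)) * h2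

/-- **Constant skewness of `F = L(L−1) + R(R−1) − 2LR`** for `L, R` independent
Poisson(λ): the normalized third moment
`E[((F − E F)/√(Var F))³] = 64λ³/(8λ²)^{3/2} = 2√2` for every `λ > 0`, so it does not
tend to `0`; in particular the normalized `F` cannot converge to a standard Gaussian. -/
theorem skewness_poisson_quadratic {Ω : Type*} [MeasurableSpace Ω]
    (P : Measure Ω) [IsProbabilityMeasure P] (lam : ℝ) (hlam : 0 < lam)
    (L R : Ω → ℕ) (hLm : Measurable L) (hRm : Measurable R)
    (hL : ∀ n : ℕ, P {ω | L ω = n}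
      = ENNReal.ofReal (Real.exp (-lam) * lam ^ n / n.factorial))
    (hR : ∀ n : ℕ, P {ω | R ω = n}
      = ENNReal.ofReal (Real.exp (-lam) * lam ^ n / n.factorial))
    (hind : IndepFun L R P)
    (F : Ω → ℝ)
    (hF : F = fun ω => (L ω : ℝ) * ((L ω : ℝ) - 1) + (R ω : ℝ) * ((R ω : ℝ) - 1)
      - 2 * (L ω : ℝ) * (R ω : ℝ)) :
    ∫ ω, ((F ω - ∫ ω', F ω' ∂P) / Real.sqrt (variance F P)) ^ 3 ∂P
      = 64 * lam ^ 3 / (8 * lam ^ 2) ^ ((3 : ℝ) / 2) ∧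
    64 * lam ^ 3 / (8 * lam ^ 2) ^ ((3 : ℝ) / 2) = 2 * Real.sqrt 2 := by
  lift lam to ℝ≥0 using hlam.le
  have hLR := hind.hasLaw_prod (hasLaw_poissonMeasure_of_measure_eq hLm hL)
    (hasLaw_poissonMeasure_of_measure_eq hRm hR)
  have hF1 : F = fun ω => eval ![(L ω : ℝ), R ω] quadratic := by
    rw [hF]
    ext ω
    simp [quadratic]
  have hmean : ∫ ω, F ω ∂P = 0 := by
    rw [hF1, hLR.integral_eval_pairPoisson, pairPoissonExpectation_quadratic]
  have hvar : variance F P = 8 * lam ^ 2 := by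
    rw [hF1, hLR.variance_eval_pairPoisson, pairPoissonExpectation_quadratic,
      pairPoissonExpectation_quadratic_sq]
    ring
  have hthird : ∫ ω, F ω ^ 3 ∂P = 64 * lam ^ 3 := by
    simp_rw [hF1, ← map_pow]
    rw [hLR.integral_eval_pairPoisson, pairPoissonExpectation_quadratic_pow_three]
  refine ⟨?_, sixty_four_mul_pow_three_div_rpow_eq hlam⟩
  simp_rw [hmean, hvar, sub_zero, div_pow]
  rw [integral_div, hthird, sqrt_pow_three_eq_rpow (by positivity)]
end
end

section
/- Let f(x₁,x₂) = 1(0 ≤ |x₁|√|x₂| ≤ 1)·1(0 ≤ |x₂|√|x₁| ≤ 1)·(2·1(x₁x₂ ≥ 0) − 1) on ℝ². Then the first chaos kernel f₁(y) = 2∫_ℝ f(y,x) dx is identically 0, while the first kernel of |f|, namely 2∫_ℝ |f(y,x)| dx, is not in L²(ℝ). -/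
/-!
For fixed `y ≠ 0`, `x ↦ fsign (y, x)` is odd away from `x = 0` (the support condition only sees
`|x|` while the sign of `y * x` flips), so its integral vanishes. On the other hand, for
`0 < y ≤ 1` the support condition reduces to `|x| ≤ y^(-1/2)`, so `∫ |fsign (y, x)| dx = 2 y^(-1/2)`
and the square of the first kernel of `|f|` is `16 / y` near `0`, which is not integrable.
-/

open MeasureTheory Set

noncomputable section

/-- `f(x₁,x₂) = 1(0 ≤ |x₁|√|x₂| ≤ 1)·1(0 ≤ |x₂|√|x₁| ≤ 1)·(2·1(x₁x₂ ≥ 0) − 1)`. -/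
def fsign : ℝ × ℝ → ℝ := fun p =>
  (if |p.1| * Real.sqrt |p.2| ≤ 1 ∧ |p.2| * Real.sqrt |p.1| ≤ 1 then 1 else 0)
    * (if 0 ≤ p.1 * p.2 then 1 else -1)

theorem integral_eq_zero_of_ae_odd {G E : Type*} [MeasurableSpace G] [AddGroup G] [MeasurableNeg G]
    [NormedAddCommGroup E] [NormedSpace ℝ E] {μ : Measure G} [μ.IsNegInvariant] {f : G → E}
    (hf : ∀ᵐ x ∂μ, f (-x) = -f x) : ∫ x, f x ∂μ = 0 := by
  have h : ∫ x, f x ∂μ = -∫ x, f x ∂μ :=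
    calc ∫ x, f x ∂μ = ∫ x, f (-x) ∂μ := (integral_neg_eq_self f μ).symm
      _ = ∫ x, -f x ∂μ := integral_congr_ae hf
      _ = -∫ x, f x ∂μ := integral_neg f
  have h2 : (2 : ℝ) • ∫ x, f x ∂μ = 0 := by
    rw [two_smul]
    nth_rewrite 1 [h]
    exact neg_add_cancel _
  exact (smul_eq_zero.1 h2).resolve_left two_ne_zero

theorem fsign_neg_right {y x : ℝ} (hy : y ≠ 0) (hx : x ≠ 0) :
    fsign (y, -x) = -fsign (y, x) := by
  simp only [fsign, abs_neg, mul_neg]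
  rcases (mul_ne_zero hy hx).lt_or_gt with h | h
  · rw [if_pos (neg_nonneg.2 h.le), if_neg h.not_ge]; ring
  · rw [if_neg (neg_neg_of_pos h).not_ge, if_pos h.le]; ring

theorem integral_fsign_eq_zero {y : ℝ} (hy : y ≠ 0) : ∫ x, fsign (y, x) = 0 := by
  refine integral_eq_zero_of_ae_odd ?_
  filter_upwards [compl_mem_ae_iff.2 (measure_singleton (0 : ℝ))] with x hx
  exact fsign_neg_right hy hx

theorem abs_fsign (p : ℝ × ℝ) :
    |fsign p| = if |p.1| * Real.sqrt |p.2| ≤ 1 ∧ |p.2| * Real.sqrt |p.1| ≤ 1 then 1 else 0 := by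
  unfold fsign
  split_ifs <;> norm_num

theorem fsign_support_iff {y : ℝ} (hy : 0 < y) (hy1 : y ≤ 1) (x : ℝ) :
    (|y| * Real.sqrt |x| ≤ 1 ∧ |x| * Real.sqrt |y| ≤ 1) ↔ |x| ≤ (Real.sqrt y)⁻¹ := by
  have hs : 0 < Real.sqrt y := Real.sqrt_pos.2 hy
  rw [abs_of_pos hy, ← one_div, le_div_iff₀ hs, and_iff_right_iff_imp]
  intro hx
  -- with `s = √y ≤ 1` and `t = √|x|`: `(s² t)² = s³ (t² s) ≤ s³ ≤ 1`
  have hs2 : Real.sqrt y ^ 2 = y := Real.sq_sqrt hy.le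
  have ht2 : Real.sqrt |x| ^ 2 = |x| := Real.sq_sqrt (abs_nonneg x)
  have hs1 : Real.sqrt y ≤ 1 := Real.sqrt_le_one.2 hy1
  nlinarith [mul_pos hs hs, mul_nonneg (Real.sqrt_nonneg |x|) hs.le, Real.sqrt_nonneg |x|]

theorem abs_fsign_eq_indicator {y : ℝ} (hy : 0 < y) (hy1 : y ≤ 1) (x : ℝ) :
    |fsign (y, x)| = (Icc (-(Real.sqrt y)⁻¹) (Real.sqrt y)⁻¹).indicator 1 x := by
  simp only [abs_fsign, fsign_support_iff hy hy1, abs_le, indicator, mem_Icc, Pi.one_apply]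

theorem integral_abs_fsign {y : ℝ} (hy : 0 < y) (hy1 : y ≤ 1) :
    ∫ x, |fsign (y, x)| = 2 * (Real.sqrt y)⁻¹ := by
  have hs : 0 ≤ (Real.sqrt y)⁻¹ := inv_nonneg.2 (Real.sqrt_nonneg y)
  simp_rw [abs_fsign_eq_indicator hy hy1]
  rw [integral_indicator_one measurableSet_Icc, measureReal_def, Real.volume_Icc,
    ENNReal.toReal_ofReal (by linarith)]
  ring

theorem sq_first_kernel_abs_fsign {y : ℝ} (hy : 0 < y) (hy1 : y ≤ 1) :
    (2 * ∫ x, |fsign (y, x)|) ^ 2 = 16 * y ^ (-1 : ℝ) := by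
  rw [integral_abs_fsign hy hy1, Real.rpow_neg_one, mul_pow, mul_pow, inv_pow,
    Real.sq_sqrt hy.le]
  ring

/-- **A square-integrable U-statistic that is not absolutely convergent.** The first chaos
kernel `f₁(y) = 2∫ f(y,x) dx` vanishes identically (for `y ≠ 0`), while the first kernel
of `|f|`, namely `y ↦ 2∫ |f(y,x)| dx`, is not in `L²(ℝ)`. -/
theorem fsign_first_kernel_zero_but_abs_not_L2 :
    (∀ y : ℝ, y ≠ 0 → 2 * ∫ x, fsign (y, x) = 0) ∧
    ¬ MemLp (fun y => 2 * ∫ x, |fsign (y, x)|) 2 (volume : Measure ℝ) := by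
  refine ⟨fun y hy => by rw [integral_fsign_eq_zero hy, mul_zero], fun hL2 => ?_⟩
  have hsq : IntegrableOn (fun y : ℝ => 16 * y ^ (-1 : ℝ)) (Ioo 0 1) :=
    hL2.integrable_sq.integrableOn.congr_fun
      (fun y hy => sq_first_kernel_abs_fsign hy.1 hy.2.le) measurableSet_Ioo
  have hrpow : IntegrableOn (fun y : ℝ => y ^ (-1 : ℝ)) (Ioo 0 1) := by
    simpa [IntegrableOn] using hsq.const_mul (16⁻¹ : ℝ)
  exact lt_irrefl _ ((intervalIntegral.integrableOn_Ioo_rpow_iff one_pos).1 hrpow)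
end
end
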